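/- arXiv:1805.04974 — 2 statements merged into one kernel-verified Lean document; each statement's English description precedes it below -/
import Mathlib

section
/- With the above data: D∘D = 0, so (T^•, D) is a cochain complex; the map ev : T^n → A^n, (η_k)_{k∈ℕ} ↦ π_n(η_0), is a chain map; and ev is a quasi-isomorphism, i.e. it induces isomorphisms H^n(T^•) ≅ H^n(A^•) for all n. -/
namespace KimHainAssembly

variable {R : Type*} [Ring R] {A B : ℕ → Type*}
  [∀ n, AddCommGroup (A n)] [∀ n, Module R (A n)]
  [∀ n, AddCommGroup (B n)] [∀ n, Module R (B n)]

/-- The total complex `T^n := ∏_{k ∈ ℕ} B^n`, with differential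
`(Dη)_k := d_B(η_k) + (-1)^n ι_{n+1}(π_n(η_{k+1}))`.  Here `ι n : A n →ₗ B (n+1)`
corresponds to the paper's `ι_{n+1} : A^n → B^{n+1}`. -/
def Dmap (dB : ∀ n, B n →ₗ[R] B (n + 1)) (ι : ∀ n, A n →ₗ[R] B (n + 1))
    (π : ∀ n, B n →ₗ[R] A n) (n : ℕ) (η : ℕ → B n) : ℕ → B (n + 1) :=
  fun k => dB n (η k) + ((-1 : R) ^ n) • ι n (π n (η (k + 1)))

/-- The evaluation map `ev : T^n → A^n`, `(η_k)_k ↦ π_n(η_0)`. -/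
def evmap (π : ∀ n, B n →ₗ[R] A n) (n : ℕ) (η : ℕ → B n) : A n :=
  π n (η 0)

/-- Let `(A^•, d_A)` and `(B^•, d_B)` be nonnegatively graded cochain complexes of
`R`-modules, with `R`-linear maps `ι n : A^n → B^{n+1}` and `π n : B^n → A^n` such that
`0 → A^{n-1} → B^n → A^n → 0` is exact for all `n` (with `A^{-1} = 0`, encoded by the
injectivity of `π 0`), `π` is a chain map, and `d_B ∘ ι = ι ∘ d_A`.  Then on the total
complex `T^n = ∏_{k} B^n` with differential `D` as above: `D ∘ D = 0`; the evaluation map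
`ev : (η_k)_k ↦ π_n(η_0)` is a chain map; and `ev` is a quasi-isomorphism, i.e. it induces
isomorphisms `H^n(T^•) ≅ H^n(A^•)` for all `n`. -/
theorem total_complex_quasi_iso
    (dA : ∀ n, A n →ₗ[R] A (n + 1)) (dB : ∀ n, B n →ₗ[R] B (n + 1))
    (ι : ∀ n, A n →ₗ[R] B (n + 1)) (π : ∀ n, B n →ₗ[R] A n)
    (hdA : ∀ n (a : A n), dA (n + 1) (dA n a) = 0)
    (hdB : ∀ n (b : B n), dB (n + 1) (dB n b) = 0)
    (hι : ∀ n, Function.Injective (ι n))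
    (hπ : ∀ n, Function.Surjective (π n))
    (hπ0 : Function.Injective (π 0))
    (hexact : ∀ n, LinearMap.ker (π (n + 1)) = LinearMap.range (ι n))
    (hπchain : ∀ n (b : B n), π (n + 1) (dB n b) = dA n (π n b))
    (hιchain : ∀ n (a : A n), dB (n + 1) (ι n a) = ι (n + 1) (dA n a)) :
    -- `D ∘ D = 0`, so `(T^•, D)` is a cochain complex
    (∀ n (η : ℕ → B n), Dmap dB ι π (n + 1) (Dmap dB ι π n η) = 0) ∧
    -- `ev` is a chain map
    (∀ n (η : ℕ → B n),
        evmap π (n + 1) (Dmap dB ι π n η) = dA n (evmap π n η)) ∧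
    -- `ev` is a quasi-isomorphism: bijectivity on `H^0`
    (∀ η : ℕ → B 0, Dmap dB ι π 0 η = 0 → evmap π 0 η = 0 → η = 0) ∧
    (∀ a : A 0, dA 0 a = 0 →
        ∃ η : ℕ → B 0, Dmap dB ι π 0 η = 0 ∧ evmap π 0 η = a) ∧
    -- `ev` is a quasi-isomorphism: bijectivity on `H^{n+1}`
    (∀ n (η : ℕ → B (n + 1)), Dmap dB ι π (n + 1) η = 0 →
        (∃ c : A n, evmap π (n + 1) η = dA n c) →
        ∃ ζ : ℕ → B n, η = Dmap dB ι π n ζ) ∧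
    (∀ n (a : A (n + 1)), dA (n + 1) a = 0 →
        ∃ η : ℕ → B (n + 1), Dmap dB ι π (n + 1) η = 0 ∧
          ∃ c : A n, evmap π (n + 1) η = a + dA n c) := by
  -- `π ∘ ι = 0` from exactness
  have hπι : ∀ (n : ℕ) (a : A n), π (n + 1) (ι n a) = 0 := by
    intro n a
    rw [← LinearMap.mem_ker, hexact]
    exact ⟨a, rfl⟩
  have hsq : ∀ n : ℕ, ((-1 : R) ^ n) * ((-1 : R) ^ n) = 1 := by
    intro n; rw [← pow_add]
    exact Even.neg_one_pow ⟨n, rfl⟩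
  refine ⟨?_, ?_, ?_, ?_, ?_, ?_⟩
  · -- D ∘ D = 0
    intro n η
    funext k
    simp only [Dmap, Pi.zero_apply, map_add, map_smul, hdB, hπchain, hπι, hιchain,
      zero_add, map_zero, smul_zero, add_zero, pow_succ, mul_neg_one, neg_smul]
    abel
  · -- ev is a chain map
    intro n η
    simp [evmap, Dmap, hπchain, hπι, map_add, map_smul]
  · -- injectivity on H^0
    intro η hD hev
    have key : ∀ k, η k = 0 := by
      intro k
      induction k with
      | zero =>
        apply hπ0
        rw [map_zero]
        exact hev
      | succ k ih =>
        have h := congrFun hD k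
        simp only [Dmap, Pi.zero_apply, ih, map_zero, zero_add, pow_zero, one_smul] at h
        apply hπ0
        rw [map_zero]
        exact hι 0 (by rw [map_zero]; exact h)
    funext k
    exact key k
  · -- surjectivity on H^0
    intro a ha
    obtain ⟨b0, hb0⟩ := hπ 0 a
    have step : ∀ b : B 0, dA 0 (π 0 b) = 0 →
        ∃ b' : B 0, ι 0 (π 0 b') = - dB 0 b ∧ dA 0 (π 0 b') = 0 := by
      intro b hb
      have hker : (- dB 0 b) ∈ LinearMap.ker (π 1) := by
        simp [LinearMap.mem_ker, hπchain, hb]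
      rw [hexact] at hker
      obtain ⟨y, hy⟩ := hker
      obtain ⟨b', hb'⟩ := hπ 0 y
      refine ⟨b', by rw [hb', hy], ?_⟩
      rw [hb']
      apply hι 1
      rw [map_zero, ← hιchain, hy]
      simp [hdB]
    choose f hf1 hf2 using step
    let s : ℕ → {b : B 0 // dA 0 (π 0 b) = 0} := fun k =>
      Nat.rec ⟨b0, by rw [hb0]; exact ha⟩ (fun _ p => ⟨f p.1 p.2, hf2 p.1 p.2⟩) k
    refine ⟨fun k => (s k).1, ?_, by simpa [evmap, s] using hb0⟩
    funext k
    have hs : ι 0 (π 0 (s (k + 1)).1) = - dB 0 (s k).1 := hf1 _ _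
    simp only [Dmap, Pi.zero_apply, pow_zero, one_smul, hs]
    simp
  · -- injectivity on H^{n+1}
    rintro n η hD ⟨c, hc⟩
    have step : ∀ (k : ℕ) (b : B n), dA n (π n b) = π (n + 1) (η k) →
        ∃ b' : B n, ι n (π n b') = ((-1 : R) ^ n) • (η k - dB n b) ∧
          dA n (π n b') = π (n + 1) (η (k + 1)) := by
      intro k b hb
      have hker : ((-1 : R) ^ n) • (η k - dB n b) ∈ LinearMap.ker (π (n + 1)) := by
        simp [LinearMap.mem_ker, map_smul, map_sub, hπchain, hb]
      rw [hexact] at hker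
      obtain ⟨y, hy⟩ := hker
      obtain ⟨b', hb'⟩ := hπ n y
      have hDk := congrFun hD k
      simp only [Dmap, Pi.zero_apply] at hDk
      have h1 := eq_neg_of_add_eq_zero_left hDk
      rw [pow_succ, mul_neg_one, neg_smul, neg_neg] at h1
      refine ⟨b', by rw [hb', hy], ?_⟩
      rw [hb']
      apply hι (n + 1)
      rw [← hιchain, hy, map_smul, map_sub, hdB, sub_zero, h1, smul_smul, hsq, one_smul]
    choose f hf1 hf2 using step
    obtain ⟨z0, hz0⟩ := hπ n c
    let s : ∀ k, {b : B n // dA n (π n b) = π (n + 1) (η k)} := fun k =>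
      Nat.rec ⟨z0, by rw [hz0]; exact hc.symm⟩ (fun k p => ⟨f k p.1 p.2, hf2 k p.1 p.2⟩) k
    refine ⟨fun k => (s k).1, ?_⟩
    funext k
    have hs : ι n (π n (s (k + 1)).1) = ((-1 : R) ^ n) • (η k - dB n (s k).1) := hf1 _ _ _
    simp only [Dmap, hs, smul_smul, hsq, one_smul]
    abel
  · -- surjectivity on H^{n+1}
    intro n a ha
    obtain ⟨b0, hb0⟩ := hπ (n + 1) a
    have step : ∀ b : B (n + 1), dA (n + 1) (π (n + 1) b) = 0 →
        ∃ b' : B (n + 1), ι (n + 1) (π (n + 1) b') = ((-1 : R) ^ n) • dB (n + 1) b ∧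
          dA (n + 1) (π (n + 1) b') = 0 := by
      intro b hb
      have hker : ((-1 : R) ^ n) • dB (n + 1) b ∈ LinearMap.ker (π (n + 2)) := by
        simp [LinearMap.mem_ker, map_smul, hπchain, hb]
      rw [hexact] at hker
      obtain ⟨y, hy⟩ := hker
      obtain ⟨b', hb'⟩ := hπ (n + 1) y
      refine ⟨b', by rw [hb', hy], ?_⟩
      rw [hb']
      apply hι (n + 2)
      rw [map_zero, ← hιchain, hy, map_smul]
      simp [hdB]
    choose f hf1 hf2 using step
    let s : ℕ → {b : B (n + 1) // dA (n + 1) (π (n + 1) b) = 0} := fun k =>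
      Nat.rec ⟨b0, by rw [hb0]; exact ha⟩ (fun _ p => ⟨f p.1 p.2, hf2 p.1 p.2⟩) k
    refine ⟨fun k => (s k).1, ?_, 0, by simp [evmap, s, hb0]⟩
    funext k
    have hs : ι (n + 1) (π (n + 1) (s (k + 1)).1) = ((-1 : R) ^ n) • dB (n + 1) (s k).1 :=
      hf1 _ _
    have hsign : ((-1 : R) ^ (n + 1)) * ((-1 : R) ^ n) = -1 := by
      rw [← pow_add]
      exact Odd.neg_one_pow ⟨n, by omega⟩
    simp only [Dmap, Pi.zero_apply, hs, smul_smul, hsign, neg_one_smul]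
    simp

end KimHainAssembly
end

section
/- Define u'' := u·u', v'' := v·v', w'' := w·p^{−s}φ(u') + (−1)^i u·w', x'' := x·u' + (−1)^i u·x', and y'' := y·a(u') + (−1)^i b(v)·y'. Then u'' ∈ A^{i+j}, v'' ∈ Fil^{r+s} ∩ C^{i+j}, w'', x'' ∈ A^{i+j−1}, y'' ∈ B^{i+j−1}, and these elements satisfy the cocycle equations for twist r+s and degree i+j: du'' = 0, dv'' = 0, dw'' = u'' − p^{−(r+s)}φ(u''), dx'' = N(u''), and dy'' = a(u'') − b(v''). -/
/-- The cochain-level cup-product computation for syntomic cohomology.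
Let `p` be a prime, `L` a field of characteristic zero, and let `A`, `B`, `C` be
`ℤ`-graded associative unital `L`-algebras (with `A^n = B^n = 0` for `n < 0`), each with
a degree `+1` differential `d` satisfying `d ∘ d = 0` and the graded Leibniz rule.
Let `a : A → B`, `b : C → B` be graded algebra maps commuting with the differentials,
`φ : A → A` a graded algebra endomorphism commuting with `d`, `N : A → A` a degree-0
derivation commuting with `d` with `N ∘ φ = p • (φ ∘ N)`, and `Fil` a decreasing,
`d`-stable, multiplicative filtration on `C`.  Given syntomic cocycle data
`(u, v, w, x, y)` of twist `r` and degree `i` and `(u', v', w', x', y')` of twist `s`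
and degree `j`, the elements `u'' = u·u'`, `v'' = v·v'`,
`w'' = w·p^{-s}φ(u') + (-1)^i u·w'`, `x'' = x·u' + (-1)^i u·x'`,
`y'' = y·a(u') + (-1)^i b(v)·y'` lie in the expected graded/filtered pieces and satisfy
the cocycle equations for twist `r + s` and degree `i + j`. -/
theorem syntomic_cup_product_cocycle
    (p : ℕ) (hp : p.Prime) (L : Type*) [Field L] [CharZero L]
    (A B C : Type*) [Ring A] [Ring B] [Ring C]
    [Algebra L A] [Algebra L B] [Algebra L C]
    (𝒜 : ℤ → Submodule L A) (ℬ : ℤ → Submodule L B) (𝒞 : ℤ → Submodule L C)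
    [GradedAlgebra 𝒜] [GradedAlgebra ℬ] [GradedAlgebra 𝒞]
    (h𝒜neg : ∀ n : ℤ, n < 0 → 𝒜 n = ⊥) (hℬneg : ∀ n : ℤ, n < 0 → ℬ n = ⊥)
    (dA : A →ₗ[L] A) (dB : B →ₗ[L] B) (dC : C →ₗ[L] C)
    (hdA_deg : ∀ (n : ℤ) (ξ : A), ξ ∈ 𝒜 n → dA ξ ∈ 𝒜 (n + 1))
    (hdB_deg : ∀ (n : ℤ) (ξ : B), ξ ∈ ℬ n → dB ξ ∈ ℬ (n + 1))
    (hdC_deg : ∀ (n : ℤ) (ξ : C), ξ ∈ 𝒞 n → dC ξ ∈ 𝒞 (n + 1))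
    (hdA2 : ∀ ξ : A, dA (dA ξ) = 0)
    (hdB2 : ∀ ξ : B, dB (dB ξ) = 0)
    (hdC2 : ∀ ξ : C, dC (dC ξ) = 0)
    (hdA_leib : ∀ (n : ℤ) (ξ η : A), ξ ∈ 𝒜 n →
      dA (ξ * η) = dA ξ * η + ((-1 : L) ^ n) • (ξ * dA η))
    (hdB_leib : ∀ (n : ℤ) (ξ η : B), ξ ∈ ℬ n →
      dB (ξ * η) = dB ξ * η + ((-1 : L) ^ n) • (ξ * dB η))
    (hdC_leib : ∀ (n : ℤ) (ξ η : C), ξ ∈ 𝒞 n →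
      dC (ξ * η) = dC ξ * η + ((-1 : L) ^ n) • (ξ * dC η))
    (a : A →ₐ[L] B) (b : C →ₐ[L] B)
    (ha_deg : ∀ (n : ℤ) (ξ : A), ξ ∈ 𝒜 n → a ξ ∈ ℬ n)
    (hb_deg : ∀ (n : ℤ) (ξ : C), ξ ∈ 𝒞 n → b ξ ∈ ℬ n)
    (ha_d : ∀ ξ : A, a (dA ξ) = dB (a ξ))
    (hb_d : ∀ ξ : C, b (dC ξ) = dB (b ξ))
    (φ : A →ₐ[L] A)
    (hφ_deg : ∀ (n : ℤ) (ξ : A), ξ ∈ 𝒜 n → φ ξ ∈ 𝒜 n)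
    (hφ_d : ∀ ξ : A, φ (dA ξ) = dA (φ ξ))
    (N : A →ₗ[L] A)
    (hN_deg : ∀ (n : ℤ) (ξ : A), ξ ∈ 𝒜 n → N ξ ∈ 𝒜 n)
    (hN_d : ∀ ξ : A, N (dA ξ) = dA (N ξ))
    (hN_der : ∀ ξ η : A, N (ξ * η) = N ξ * η + ξ * N η)
    (hNφ : ∀ ξ : A, N (φ ξ) = (p : L) • φ (N ξ))
    (Fil : ℤ → Submodule L C)
    (hFil_mono : ∀ r s : ℤ, r ≤ s → Fil s ≤ Fil r)
    (hFil_d : ∀ (r : ℤ) (ξ : C), ξ ∈ Fil r → dC ξ ∈ Fil r)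
    (hFil_mul : ∀ (r s : ℤ) (ξ η : C), ξ ∈ Fil r → η ∈ Fil s → ξ * η ∈ Fil (r + s))
    (r s i j : ℤ) (hr : 0 ≤ r) (hs : 0 ≤ s) (hi : 0 ≤ i) (hj : 0 ≤ j)
    (u : A) (v : C) (w x : A) (y : B)
    (hu : u ∈ 𝒜 i) (hvFil : v ∈ Fil r) (hvdeg : v ∈ 𝒞 i)
    (hw : w ∈ 𝒜 (i - 1)) (hx : x ∈ 𝒜 (i - 1)) (hy : y ∈ ℬ (i - 1))
    (hdu : dA u = 0) (hdv : dC v = 0)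
    (hdw : dA w = u - ((p : L) ^ (-r)) • φ u)
    (hdx : dA x = N u)
    (hdy : dB y = a u - b v)
    (u' : A) (v' : C) (w' x' : A) (y' : B)
    (hu' : u' ∈ 𝒜 j) (hvFil' : v' ∈ Fil s) (hvdeg' : v' ∈ 𝒞 j)
    (hw' : w' ∈ 𝒜 (j - 1)) (hx' : x' ∈ 𝒜 (j - 1)) (hy' : y' ∈ ℬ (j - 1))
    (hdu' : dA u' = 0) (hdv' : dC v' = 0)
    (hdw' : dA w' = u' - ((p : L) ^ (-s)) • φ u')
    (hdx' : dA x' = N u')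
    (hdy' : dB y' = a u' - b v') :
    -- memberships in the expected graded and filtered pieces
    u * u' ∈ 𝒜 (i + j) ∧
    v * v' ∈ Fil (r + s) ∧ v * v' ∈ 𝒞 (i + j) ∧
    (w * (((p : L) ^ (-s)) • φ u') + ((-1 : L) ^ i) • (u * w')) ∈ 𝒜 (i + j - 1) ∧
    (x * u' + ((-1 : L) ^ i) • (u * x')) ∈ 𝒜 (i + j - 1) ∧
    (y * a u' + ((-1 : L) ^ i) • (b v * y')) ∈ ℬ (i + j - 1) ∧
    -- the cocycle equations for twist `r + s` and degree `i + j`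
    dA (u * u') = 0 ∧
    dC (v * v') = 0 ∧
    dA (w * (((p : L) ^ (-s)) • φ u') + ((-1 : L) ^ i) • (u * w')) =
      u * u' - ((p : L) ^ (-(r + s))) • φ (u * u') ∧
    dA (x * u' + ((-1 : L) ^ i) • (u * x')) = N (u * u') ∧
    dB (y * a u' + ((-1 : L) ^ i) • (b v * y')) = a (u * u') - b (v * v') := by

  have hpL : (p : L) ≠ 0 := Nat.cast_ne_zero.mpr hp.pos.ne'
  have hsq : ((-1 : L) ^ i) * ((-1 : L) ^ i) = 1 := by
    rw [← mul_zpow]; norm_num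
  refine ⟨SetLike.mul_mem_graded hu hu', hFil_mul r s v v' hvFil hvFil',
    SetLike.mul_mem_graded hvdeg hvdeg', ?_, ?_, ?_, ?_, ?_, ?_, ?_, ?_⟩
  · have h1 : w * (((p : L) ^ (-s)) • φ u') ∈ 𝒜 (i - 1 + j) :=
      SetLike.mul_mem_graded hw (Submodule.smul_mem _ _ (hφ_deg j u' hu'))
    have h2 : u * w' ∈ 𝒜 (i + (j - 1)) := SetLike.mul_mem_graded hu hw'
    rw [show i - 1 + j = i + j - 1 by ring] at h1
    rw [show i + (j - 1) = i + j - 1 by ring] at h2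
    exact Submodule.add_mem _ h1 (Submodule.smul_mem _ _ h2)
  · have h1 : x * u' ∈ 𝒜 (i - 1 + j) := SetLike.mul_mem_graded hx hu'
    have h2 : u * x' ∈ 𝒜 (i + (j - 1)) := SetLike.mul_mem_graded hu hx'
    rw [show i - 1 + j = i + j - 1 by ring] at h1
    rw [show i + (j - 1) = i + j - 1 by ring] at h2
    exact Submodule.add_mem _ h1 (Submodule.smul_mem _ _ h2)
  · have h1 : y * a u' ∈ ℬ (i - 1 + j) :=
      SetLike.mul_mem_graded hy (ha_deg j u' hu')
    have h2 : b v * y' ∈ ℬ (i + (j - 1)) :=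
      SetLike.mul_mem_graded (hb_deg i v hvdeg) hy'
    rw [show i - 1 + j = i + j - 1 by ring] at h1
    rw [show i + (j - 1) = i + j - 1 by ring] at h2
    exact Submodule.add_mem _ h1 (Submodule.smul_mem _ _ h2)
  · rw [hdA_leib i u u' hu, hdu, hdu', zero_mul, mul_zero, smul_zero, add_zero]
  · rw [hdC_leib i v v' hvdeg, hdv, hdv', zero_mul, mul_zero, smul_zero, add_zero]
  · have hφu' : dA (((p : L) ^ (-s)) • φ u') = 0 := by
      rw [map_smul, ← hφ_d, hdu', map_zero, smul_zero]
    rw [map_add, hdA_leib (i - 1) _ _ hw, hφu', mul_zero, smul_zero, add_zero,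
        map_smul, hdA_leib i u w' hu, hdu, zero_mul, zero_add, hdw, hdw',
        smul_smul, hsq, one_smul, map_mul, neg_add, zpow_add₀ hpL]
    simp only [sub_mul, mul_sub, smul_mul_assoc, mul_smul_comm, smul_smul, smul_sub]
    module
  · rw [map_add, hdA_leib (i - 1) x u' hx, hdx, hdu', mul_zero, smul_zero, add_zero,
        map_smul, hdA_leib i u x' hu, hdu, zero_mul, zero_add, hdx',
        smul_smul, hsq, one_smul, hN_der]
  · rw [map_add, hdB_leib (i - 1) y (a u') hy, ← ha_d, hdu', map_zero, mul_zero,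
        smul_zero, add_zero, hdy, map_smul,
        hdB_leib i (b v) y' (hb_deg i v hvdeg), ← hb_d, hdv, map_zero, zero_mul,
        zero_add, hdy', smul_smul, hsq, one_smul, map_mul, map_mul]
    noncomm_ring
end
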